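/- For all n ≥ k ≥ 2, the indicated domination number of the k-th power of the path satisfies the lower bound γᵢ(P_n^k) ≥ (⌈log₂(k+1)⌉ + 1)·⌊n/(4k)⌋. -/

import Mathlib

open Finset

open scoped Classical

noncomputable section

namespace IndicatedDom

variable {V : Type*} [Fintype V]

/-- Closed neighborhood `N[v]` as a `Finset`. -/
def cnbhd (G : SimpleGraph V) (v : V) : Finset V :=
  insert v (G.neighborFinset v)

/-- `D` is a dominating set of `G`. -/
def Dominates (G : SimpleGraph V) (D : Finset V) : Prop :=
  ∀ u, ∃ v ∈ D, u ∈ cnbhd G v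

/-- The set of vertices not dominated by `D`. -/
def undom (G : SimpleGraph V) (D : Finset V) : Finset V :=
  univ.filter fun u => ∀ v ∈ D, u ∉ cnbhd G v

/-- Game value of the indicated domination game with a fuel parameter:
given the set `D` of vertices selected so far, Dominator indicates an
undominated vertex `u` (minimizing), Staller selects a vertex of `N[u]`
(maximizing); each selection counts one. -/
def giAux (G : SimpleGraph V) : ℕ → Finset V → ℕ
  | 0, _ => 0
  | (fuel+1), D =>
    if h : (undom G D).Nonempty then
      (undom G D).inf' h fun u =>
        (cnbhd G u).sup' ⟨u, Finset.mem_insert_self u _⟩ fun v => giAux G fuel (insert v D) + 1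
    else 0

/-- The indicated domination number `γᵢ(G)`. -/
def indicatedDomNum (G : SimpleGraph V) : ℕ :=
  giAux G (Fintype.card V) ∅

/-- Game value of the standard domination game with a fuel parameter:
`dom = true` means it is Dominator's turn (minimizing); legal moves are
vertices dominating at least one new vertex. -/
def gameAux (G : SimpleGraph V) : ℕ → Bool → Finset V → ℕ
  | 0, _, _ => 0
  | (fuel+1), dom, D =>
    if h : (univ.filter fun v => ∃ u ∈ cnbhd G v, u ∈ undom G D).Nonempty then
      if dom then
        (univ.filter fun v => ∃ u ∈ cnbhd G v, u ∈ undom G D).inf' h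
          fun v => gameAux G fuel false (insert v D) + 1
      else
        (univ.filter fun v => ∃ u ∈ cnbhd G v, u ∈ undom G D).sup' h
          fun v => gameAux G fuel true (insert v D) + 1
    else 0

/-- The game domination number `γ_g(G)` (Dominator starts). -/
def gameDomNum (G : SimpleGraph V) : ℕ :=
  gameAux G (Fintype.card V) true ∅

/-- A minimal dominating set. -/
def IsMinimalDominating (G : SimpleGraph V) (D : Finset V) : Prop :=
  Dominates G D ∧ ∀ D' ⊂ D, ¬ Dominates G D'

/-- The upper domination number `Γ(G)`. -/
def upperDomNum (G : SimpleGraph V) : ℕ :=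
  sSup {k | ∃ D : Finset V, IsMinimalDominating G D ∧ D.card = k}

/-- A dominating (Grundy) sequence: every vertex dominates something new,
and the whole sequence dominates `G`. -/
def IsDominatingSeq (G : SimpleGraph V) (l : List V) : Prop :=
  (∀ i : Fin l.length, ∃ u, u ∈ cnbhd G (l.get i) ∧
      ∀ j : Fin l.length, (j : ℕ) < (i : ℕ) → u ∉ cnbhd G (l.get j)) ∧
    Dominates G l.toFinset

/-- The Grundy domination number `γ_gr(G)`. -/
def grundyDomNum (G : SimpleGraph V) : ℕ :=
  sSup {k | ∃ l : List V, IsDominatingSeq G l ∧ l.length = k}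

/-- The independence number `α(G)`. -/
def indepNum (G : SimpleGraph V) : ℕ :=
  sSup {k | ∃ S : Finset V, (∀ x ∈ S, ∀ y ∈ S, ¬ G.Adj x y) ∧ S.card = k}

/-- `S` is irredundant: every `x ∈ S` has a private neighbor w.r.t. `S`. -/
def Irredundant (G : SimpleGraph V) (S : Finset V) : Prop :=
  ∀ x ∈ S, ∃ w, (∃ v ∈ S, w ∈ cnbhd G v) ∧ ¬ ∃ v ∈ S.erase x, w ∈ cnbhd G v

/-- The upper irredundance number `IR(G)`. -/
def upperIrredNum (G : SimpleGraph V) : ℕ :=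
  sSup {k | ∃ S : Finset V, Irredundant G S ∧ (∀ T, S ⊂ T → ¬ Irredundant G T) ∧ S.card = k}

/-- The star `K_{1,n}` with center `0`. -/
def starGraph (n : ℕ) : SimpleGraph (Fin (n+1)) where
  Adj a b := a ≠ b ∧ (a = 0 ∨ b = 0)
  symm := by constructor; intro a b h; exact ⟨h.1.symm, h.2.symm⟩
  loopless := by constructor; intro a h; exact h.1 rfl

/-- Two copies of `K_n` with a matching joining corresponding vertices of
index `≥ 1` (i.e. `K_n □ K₂` minus the matching edge at index `0`). -/
def Hgraph (n : ℕ) : SimpleGraph (Fin n × Bool) where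
  Adj a b := (a.2 = b.2 ∧ a.1 ≠ b.1) ∨ (a.2 ≠ b.2 ∧ a.1 = b.1 ∧ (a.1 : ℕ) ≠ 0)
  symm := by
    constructor
    rintro ⟨i, s⟩ ⟨j, t⟩ (⟨h1, h2⟩ | ⟨h1, h2, h3⟩)
    · exact Or.inl ⟨h1.symm, h2.symm⟩
    · exact Or.inr ⟨h1.symm, h2.symm, h2 ▸ h3⟩
  loopless := by constructor; rintro ⟨i, s⟩ (⟨_, h⟩ | ⟨h, _⟩) <;> exact h rfl

/-- The `k`-th power of the path on `n` vertices: `i ~ j` iff `1 ≤ |i-j| ≤ k`. -/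
def pathPow (n k : ℕ) : SimpleGraph (Fin n) where
  Adj i j := i ≠ j ∧ (i : ℕ) ≤ (j : ℕ) + k ∧ (j : ℕ) ≤ (i : ℕ) + k
  symm := by constructor; intro i j h; exact ⟨h.1.symm, h.2.2, h.2.1⟩
  loopless := by constructor; intro i h; exact h.1 rfl

/-- The cycle on `m` vertices (for `m ≥ 3`), modeled on `ZMod m`. -/
def cyc (m : ℕ) : SimpleGraph (ZMod m) where
  Adj i j := i ≠ j ∧ (i + 1 = j ∨ j + 1 = i)
  symm := by constructor; intro i j h; exact ⟨h.1.symm, h.2.symm⟩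
  loopless := by constructor; intro i h; exact h.1 rfl

/-- The graph `D₁`: a `9`-cycle `x₁x₂…x₉` plus chords `x₁x₃, x₄x₆, x₇x₉`
(vertex `xᵢ` is represented by `i - 1 : ZMod 9`). -/
def DGraph : SimpleGraph (ZMod 9) where
  Adj i j := i ≠ j ∧ (i + 1 = j ∨ j + 1 = i ∨
    (i = 0 ∧ j = 2) ∨ (i = 2 ∧ j = 0) ∨ (i = 3 ∧ j = 5) ∨ (i = 5 ∧ j = 3) ∨
    (i = 6 ∧ j = 8) ∨ (i = 8 ∧ j = 6))
  symm := by constructor; intro i j h; refine ⟨h.1.symm, ?_⟩; tauto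
  loopless := by constructor; intro i h; exact h.1 rfl


/-!
Cut the path into `m = ⌊n/(4k)⌋` blocks of `4k` consecutive vertices; the `2k` middle vertices
`[4kj + k, 4kj + 3k)` of block `j` can only be dominated from inside block `j`. Staller keeps,
in every block, a segment of the middle that is exactly its set of undominated middle vertices,
and uses the potential `∑ ⌈log₂ (length + 1)⌉`, initially `m (⌈log₂ (k + 1)⌉ + 1)`.
If Dominator indicates a vertex of a segment, Staller selects the vertex at distance `k` on the
side of the shorter part, which dominates exactly that part; the longer part keeps at least half
of the segment, so the potential drops by at most one. Any other undominated vertex either lies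
beyond the last middle, where Staller selects it, or outside the middle of its own block, where
Staller selects the nearer end vertex of that block; this removes at most one end vertex of one
segment. Hence every selection costs at most one unit of potential, which is zero once everything
is dominated.
-/

lemma mem_cnbhd {G : SimpleGraph V} {u v : V} : v ∈ cnbhd G u ↔ v = u ∨ G.Adj u v := by
  simp [cnbhd]

lemma mem_cnbhd_comm {G : SimpleGraph V} {u v : V} : v ∈ cnbhd G u ↔ u ∈ cnbhd G v := by
  simp only [mem_cnbhd, eq_comm, SimpleGraph.adj_comm]

lemma mem_undom {G : SimpleGraph V} {D : Finset V} {u : V} :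
    u ∈ undom G D ↔ ∀ v ∈ D, u ∉ cnbhd G v := by
  simp [undom]

lemma undom_eq_empty_of_card_le {G : SimpleGraph V} {D : Finset V}
    (hD : Fintype.card V ≤ #D) : undom G D = ∅ := by
  have hD : D = univ := eq_univ_of_card D (le_antisymm (card_le_univ D) hD)
  subst hD
  exact eq_empty_of_forall_notMem fun x hx =>
    mem_undom.1 hx x (mem_univ x) (mem_insert_self x _)

/-- A Staller strategy: `Inv` is what Staller maintains about the selected set and her
bookkeeping state, and `φ` is a potential that each of her answers lowers by at most one. -/
theorem le_giAux_of_strategy (G : SimpleGraph V) {σ : Type*} (Inv : Finset V → σ → Prop)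
    (φ : σ → ℕ) (hend : ∀ D s, Inv D s → undom G D = ∅ → φ s = 0)
    (hstep : ∀ D s, Inv D s → ∀ u ∈ undom G D,
      ∃ v ∈ cnbhd G u, ∃ s', Inv (insert v D) s' ∧ φ s ≤ φ s' + 1) :
    ∀ fuel D s, Inv D s → Fintype.card V ≤ fuel + #D → φ s ≤ giAux G fuel D := by
  intro fuel
  induction fuel with
  | zero =>
    intro D s hI hD
    rw [hend D s hI (undom_eq_empty_of_card_le (by simpa using hD))]
    exact Nat.zero_le _
  | succ fuel ih =>
    intro D s hI hD
    rw [giAux]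
    split_ifs with hne
    · refine le_inf' _ _ fun u hu => ?_
      obtain ⟨v, hv, s', hI', hφ⟩ := hstep D s hI u hu
      have hvD : v ∉ D := fun hvD => mem_undom.1 hu v hvD (mem_cnbhd_comm.1 hv)
      have hrec := ih (insert v D) s' hI' (by rw [card_insert_of_notMem hvD]; omega)
      calc φ s ≤ giAux G fuel (insert v D) + 1 := by omega
        _ ≤ _ := le_sup' (fun w => giAux G fuel (insert w D) + 1) hv
    · rw [hend D s hI (not_nonempty_iff_eq_empty.1 hne)]

theorem le_indicatedDomNum_of_strategy (G : SimpleGraph V) {σ : Type*}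
    (Inv : Finset V → σ → Prop) (φ : σ → ℕ) {s₀ : σ} (h₀ : Inv ∅ s₀)
    (hend : ∀ D s, Inv D s → undom G D = ∅ → φ s = 0)
    (hstep : ∀ D s, Inv D s → ∀ u ∈ undom G D,
      ∃ v ∈ cnbhd G u, ∃ s', Inv (insert v D) s' ∧ φ s ≤ φ s' + 1) :
    φ s₀ ≤ indicatedDomNum G :=
  le_giAux_of_strategy G Inv φ hend hstep _ ∅ s₀ h₀ (by simp)

lemma clog_two_succ_le_of_le_two_mul_add_one {l m : ℕ} (h : l ≤ 2 * m + 1) :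
    Nat.clog 2 (l + 1) ≤ Nat.clog 2 (m + 1) + 1 := by
  rw [Nat.clog_le_iff_le_pow one_lt_two, pow_succ]
  have := Nat.le_pow_clog one_lt_two (m + 1)
  omega

lemma clog_two_two_mul_add_one {k : ℕ} (hk : 0 < k) :
    Nat.clog 2 (2 * k + 1) = Nat.clog 2 (k + 1) + 1 := by
  rw [Nat.clog_of_two_le one_lt_two (by omega)]
  congr 2
  omega

lemma mul_add_le_mul_of_lt {c i j : ℕ} (h : i < j) : c * i + c ≤ c * j := by
  simpa [Nat.mul_succ] using Nat.mul_le_mul_left c h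

section PathPower

variable {n k m : ℕ}

def Near (k x y : ℕ) : Prop := x ≤ y + k ∧ y ≤ x + k

lemma near_comm {x y : ℕ} : Near k x y ↔ Near k y x := And.comm

lemma mem_cnbhd_pathPow {u v : Fin n} : v ∈ cnbhd (pathPow n k) u ↔ Near k u v := by
  rw [mem_cnbhd, Near, ← Fin.val_inj]
  simp only [pathPow, ne_eq, ← Fin.val_inj]
  omega

def Dominated (k : ℕ) (D : Finset (Fin n)) (x : ℕ) : Prop := ∃ d ∈ D, Near k x d

lemma dominated_insert {D : Finset (Fin n)} {v : Fin n} {x : ℕ} :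
    Dominated k (insert v D) x ↔ Near k x v ∨ Dominated k D x := by
  simp [Dominated]

lemma mem_undom_pathPow {D : Finset (Fin n)} {u : Fin n} :
    u ∈ undom (pathPow n k) D ↔ ¬ Dominated k D u := by
  simp [mem_undom, mem_cnbhd_pathPow, Dominated, near_comm]

lemma not_near_of_ne_block {i j v x : ℕ} (hij : i ≠ j) (hv : 4 * k * i ≤ v)
    (hv' : v < 4 * k * i + 4 * k) (hx : 4 * k * j + k ≤ x) (hx' : x < 4 * k * j + 3 * k) :
    ¬ Near k x v := by
  unfold Near
  rcases hij.lt_or_gt with h | h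
  · have := mul_add_le_mul_of_lt (c := 4 * k) h
    omega
  · have := mul_add_le_mul_of_lt (c := 4 * k) h
    omega

/-- `f j` encodes the half-open segment `[(f j).1, (f j).2)` of the middle of block `j`. -/
def StallerInv (k m : ℕ) (D : Finset (Fin n)) (f : ℕ → ℕ × ℕ) : Prop :=
  ∀ j < m, 4 * k * j + k ≤ (f j).1 ∧ (f j).1 ≤ (f j).2 ∧ (f j).2 ≤ 4 * k * j + 3 * k ∧
    ∀ x, 4 * k * j + k ≤ x → x < 4 * k * j + 3 * k →
      (¬ Dominated k D x ↔ (f j).1 ≤ x ∧ x < (f j).2)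

def segPotential (p : ℕ × ℕ) : ℕ := Nat.clog 2 (p.2 - p.1 + 1)

def potential (m : ℕ) (f : ℕ → ℕ × ℕ) : ℕ := ∑ j ∈ range m, segPotential (f j)

lemma potential_le_potential_update_add_one {f : ℕ → ℕ × ℕ} {i : ℕ} {p : ℕ × ℕ}
    (hp : segPotential (f i) ≤ segPotential p + 1) :
    potential m f ≤ potential m (Function.update f i p) + 1 := by
  have hcomp (j : ℕ) : segPotential (Function.update f i p j) =
      Function.update (segPotential ∘ f) i (segPotential p) j :=
    Function.apply_update (fun _ => segPotential) f i p j
  simp only [potential, hcomp]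
  by_cases hi : i ∈ range m
  · rw [sum_update_of_mem hi, sum_eq_add_sum_sdiff_singleton_of_mem hi]
    simp only [Function.comp_apply]
    omega
  · rw [sum_update_of_notMem hi]
    simp

def CanAnswer (k m : ℕ) (D : Finset (Fin n)) (f : ℕ → ℕ × ℕ) (u : ℕ) : Prop :=
  ∃ v : Fin n, Near k u v ∧
    ∃ f', StallerInv k m (insert v D) f' ∧ potential m f ≤ potential m f' + 1

variable {D : Finset (Fin n)} {f : ℕ → ℕ × ℕ}

lemma StallerInv.insert_of_forall_not_near (hI : StallerInv k m D f) (v : Fin n)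
    (hv : ∀ j < m, ∀ x, (f j).1 ≤ x → x < (f j).2 → ¬ Near k x v) :
    StallerInv k m (insert v D) f := by
  intro j hj
  obtain ⟨hlo, hle, hhi, hdom⟩ := hI j hj
  refine ⟨hlo, hle, hhi, fun x hx hx' => ?_⟩
  rw [dominated_insert, not_or, hdom x hx hx']
  exact ⟨fun h => h.2, fun h => ⟨hv j hj x h.1 h.2, h⟩⟩

lemma StallerInv.insert_trim (hI : StallerInv k m D f) {i : ℕ} (hi : i < m) (v : Fin n)
    (hv : 4 * k * i ≤ v) (hv' : (v : ℕ) < 4 * k * i + 4 * k) {a b : ℕ}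
    (ha : (f i).1 ≤ a) (hab : a ≤ b) (hb : b ≤ (f i).2)
    (hcut : ∀ x, (f i).1 ≤ x → x < (f i).2 → (Near k x v ↔ ¬ (a ≤ x ∧ x < b))) :
    StallerInv k m (insert v D) (Function.update f i (a, b)) := by
  intro j hj
  obtain ⟨hlo, hle, hhi, hdom⟩ := hI j hj
  rcases eq_or_ne j i with rfl | hji
  · simp only [Function.update_self]
    refine ⟨by omega, hab, by omega, fun x hx hx' => ?_⟩
    rw [dominated_insert, not_or, hdom x hx hx']
    constructor
    · rintro ⟨hfar, hseg⟩
      by_contra hcut'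
      exact hfar ((hcut x hseg.1 hseg.2).2 hcut')
    · intro hnew
      have hseg : (f j).1 ≤ x ∧ x < (f j).2 := ⟨ha.trans hnew.1, hnew.2.trans_le hb⟩
      exact ⟨fun hnear => (hcut x hseg.1 hseg.2).1 hnear hnew, hseg⟩
  · rw [Function.update_of_ne hji]
    refine ⟨hlo, hle, hhi, fun x hx hx' => ?_⟩
    rw [dominated_insert, not_or, and_iff_right (not_near_of_ne_block hji.symm hv hv' hx hx'),
      hdom x hx hx']

lemma StallerInv.canAnswer_of_trim (hI : StallerInv k m D f) {i u : ℕ} (hi : i < m) (v : ℕ)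
    (hvn : v < n) (huv : Near k u v) (hv : 4 * k * i ≤ v) (hv' : v < 4 * k * i + 4 * k)
    {a b : ℕ} (ha : (f i).1 ≤ a) (hab : a ≤ b) (hb : b ≤ (f i).2)
    (hcut : ∀ x, (f i).1 ≤ x → x < (f i).2 → (Near k x v ↔ ¬ (a ≤ x ∧ x < b)))
    (hlen : (f i).2 - (f i).1 ≤ 2 * (b - a) + 1) : CanAnswer k m D f u :=
  ⟨⟨v, hvn⟩, huv, _, hI.insert_trim hi ⟨v, hvn⟩ hv hv' ha hab hb hcut,
    potential_le_potential_update_add_one (clog_two_succ_le_of_le_two_mul_add_one hlen)⟩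

lemma StallerInv.canAnswer_of_mem_seg (hI : StallerInv k m D f) (hm : 4 * k * m ≤ n)
    {j u : ℕ} (hj : j < m) (hu : (f j).1 ≤ u) (hu' : u < (f j).2) : CanAnswer k m D f u := by
  obtain ⟨hlo, -, hhi, -⟩ := hI j hj
  have hjm := mul_add_le_mul_of_lt (c := 4 * k) hj
  by_cases hleft : (f j).2 - (f j).1 ≤ 2 * (u - (f j).1) + 1
  · exact hI.canAnswer_of_trim hj (u + k) (by omega) (by unfold Near; omega) (by omega)
      (by omega) le_rfl hu (by omega) (fun x _ _ => by unfold Near; omega) hleft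
  · exact hI.canAnswer_of_trim hj (u - k) (by omega) (by unfold Near; omega) (by omega)
      (by omega) (by omega) hu' le_rfl (fun x _ _ => by unfold Near; omega) (by omega)

lemma StallerInv.canAnswer_of_near_block_start (hI : StallerInv k m D f) (hm : 4 * k * m ≤ n)
    (hk : 0 < k) {j u : ℕ} (hj : j < m) (hu : Near k u (4 * k * j)) : CanAnswer k m D f u := by
  obtain ⟨hlo, hle, hhi, -⟩ := hI j hj
  have hjm := mul_add_le_mul_of_lt (c := 4 * k) hj
  by_cases htouch : (f j).1 = 4 * k * j + k ∧ (f j).1 < (f j).2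
  · exact hI.canAnswer_of_trim hj (4 * k * j) (by omega) hu le_rfl (by omega)
      (a := (f j).1 + 1) (by omega) (by omega) le_rfl (fun x _ _ => by unfold Near; omega)
      (by omega)
  · exact hI.canAnswer_of_trim hj (4 * k * j) (by omega) hu le_rfl (by omega) le_rfl hle le_rfl
      (fun x _ _ => by unfold Near; omega) (by omega)

lemma StallerInv.canAnswer_of_near_block_end (hI : StallerInv k m D f) (hm : 4 * k * m ≤ n)
    (hk : 0 < k) {j u : ℕ} (hj : j < m) (hu : Near k u (4 * k * j + 4 * k - 1)) :
    CanAnswer k m D f u := by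
  obtain ⟨hlo, hle, hhi, -⟩ := hI j hj
  have hjm := mul_add_le_mul_of_lt (c := 4 * k) hj
  by_cases htouch : (f j).2 = 4 * k * j + 3 * k ∧ (f j).1 < (f j).2
  · exact hI.canAnswer_of_trim hj (4 * k * j + 4 * k - 1) (by omega) hu (by omega) (by omega)
      (b := (f j).2 - 1) le_rfl (by omega) (by omega) (fun x _ _ => by unfold Near; omega)
      (by omega)
  · exact hI.canAnswer_of_trim hj (4 * k * j + 4 * k - 1) (by omega) hu (by omega) (by omega)
      le_rfl hle le_rfl (fun x _ _ => by unfold Near; omega) (by omega)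

lemma StallerInv.canAnswer_of_le (hI : StallerInv k m D f) {u : ℕ} (hu : 4 * k * m ≤ u)
    (hun : u < n) : CanAnswer k m D f u :=
  ⟨⟨u, hun⟩, ⟨Nat.le_add_right u k, Nat.le_add_right u k⟩, f,
    hI.insert_of_forall_not_near _ fun j hj x _ hx => by
      obtain ⟨-, -, hhi, -⟩ := hI j hj
      have := mul_add_le_mul_of_lt (c := 4 * k) hj
      simp only [Near]
      omega,
    Nat.le_succ _⟩

lemma StallerInv.canAnswer (hI : StallerInv k m D f) (hm : 4 * k * m ≤ n) (hk : 0 < k)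
    {u : ℕ} (hun : u < n) (hu : ¬ Dominated k D u) : CanAnswer k m D f u := by
  by_cases hbeyond : 4 * k * m ≤ u
  · exact hI.canAnswer_of_le hbeyond hun
  by_cases hseg : ∃ j < m, (f j).1 ≤ u ∧ u < (f j).2
  · obtain ⟨j, hj, hju, hju'⟩ := hseg
    exact hI.canAnswer_of_mem_seg hm hj hju hju'
  have hj : u / (4 * k) < m := Nat.div_lt_of_lt_mul (by omega)
  have hdecomp := Nat.div_add_mod u (4 * k)
  have hr := Nat.mod_lt u (by omega : 0 < 4 * k)
  set j := u / (4 * k)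
  obtain ⟨-, -, -, hdom⟩ := hI j hj
  have hgap : u % (4 * k) < k ∨ 3 * k ≤ u % (4 * k) := by
    by_contra hmid
    exact hseg ⟨j, hj, (hdom u (by omega) (by omega)).1 hu⟩
  rcases hgap with hgap | hgap
  · exact hI.canAnswer_of_near_block_start hm hk hj (by unfold Near; omega)
  · exact hI.canAnswer_of_near_block_end hm hk hj (by unfold Near; omega)

lemma StallerInv.potential_eq_zero (hI : StallerInv k m D f) (hm : 4 * k * m ≤ n)
    (hD : ∀ x : Fin n, Dominated k D x) : potential m f = 0 := by
  refine sum_eq_zero fun j hj => ?_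
  rw [mem_range] at hj
  obtain ⟨hlo, -, hhi, hdom⟩ := hI j hj
  have hjm := mul_add_le_mul_of_lt (c := 4 * k) hj
  have hempty : (f j).2 ≤ (f j).1 := by
    by_contra hne
    exact (hdom (f j).1 hlo (by omega)).2 ⟨le_rfl, by omega⟩ (hD ⟨(f j).1, by omega⟩)
  simp [segPotential, Nat.sub_eq_zero_of_le hempty]

def initialSegments (k : ℕ) (j : ℕ) : ℕ × ℕ := (4 * k * j + k, 4 * k * j + 3 * k)

lemma stallerInv_initialSegments : StallerInv k m (∅ : Finset (Fin n)) (initialSegments k) :=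
  fun j _ => ⟨le_rfl, by simp only [initialSegments]; omega, le_rfl, fun x hx hx' => by
    simp [Dominated, initialSegments, hx, hx']⟩

lemma potential_initialSegments (hk : 0 < k) :
    potential m (initialSegments k) = m * (Nat.clog 2 (k + 1) + 1) := by
  have hlen (j : ℕ) : segPotential (initialSegments k j) = Nat.clog 2 (k + 1) + 1 := by
    rw [segPotential, initialSegments, ← clog_two_two_mul_add_one hk]
    congr 1
    omega
  simp [potential, hlen]

end PathPower

theorem stmt12_general (n k : ℕ) :
    (Nat.clog 2 (k + 1) + 1) * (n / (4 * k)) ≤ indicatedDomNum (pathPow n k) := by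
  rcases Nat.eq_zero_or_pos k with rfl | hk
  · simp
  have hm : 4 * k * (n / (4 * k)) ≤ n := Nat.mul_div_le n (4 * k)
  rw [mul_comm, ← potential_initialSegments hk]
  refine le_indicatedDomNum_of_strategy (pathPow n k) (StallerInv k (n / (4 * k)))
    (potential (n / (4 * k))) stallerInv_initialSegments ?_ ?_
  · intro D f hI hD
    refine hI.potential_eq_zero hm fun x => ?_
    by_contra hx
    simpa [hD] using mem_undom_pathPow.2 hx
  · intro D f hI u hu
    obtain ⟨v, huv, f', hI', hφ⟩ := hI.canAnswer hm hk u.isLt (mem_undom_pathPow.1 hu)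
    -- `convert` bridges the classical and the `Fin` instance of `DecidableEq` inside `insert`
    exact ⟨v, mem_cnbhd_pathPow.2 huv, f', by convert hI', hφ⟩

/-- for `n ≥ k ≥ 2`,
`γᵢ(P_n^k) ≥ (⌈log₂(k+1)⌉ + 1) ⋅ ⌊n/(4k)⌋`. -/
theorem stmt12 (n k : ℕ) (hk : 2 ≤ k) (hn : k ≤ n) :
    (Nat.clog 2 (k + 1) + 1) * (n / (4 * k)) ≤ indicatedDomNum (pathPow n k) :=
  stmt12_general n k

end IndicatedDom
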